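/- Assume m ≥ 2. For each ε ∈ {+, −}, the subgroup O^ε has exactly q/2 + 1 orbits on the coset space Ω^ε = G/O^ε (equivalently, the permutation character π^ε of G on Ω^ε satisfies ⟨π^ε, π^ε⟩ = q/2 + 1). -/

import Mathlib

set_option synthInstance.maxHeartbeats 1000000
set_option maxHeartbeats 1000000

open scoped BigOperators

/-- The field with `2^f` elements (`q = 2^f`). -/
abbrev Fq (f : ℕ) : Type := GaloisField 2 f

/-- The natural `2m`-dimensional symplectic space over `Fq f`. -/
abbrev V (f m : ℕ) : Type := (Fin m → Fq f) × (Fin m → Fq f)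

/-- The standard nondegenerate alternating bilinear form
`B((x,y),(x',y')) = ∑ i, (x i * y' i + y i * x' i)`. -/
noncomputable def B {f m : ℕ} (u w : V f m) : Fq f :=
  ∑ i, (u.1 i * w.2 i + u.2 i * w.1 i)

/-- The symplectic group `Sp_{2m}(2^f)`: the invertible linear maps preserving `B`. -/
def Sp (f m : ℕ) : Subgroup ((V f m →ₗ[Fq f] V f m)ˣ) where
  carrier := {g | ∀ u w : V f m,
    B ((g : V f m →ₗ[Fq f] V f m) u) ((g : V f m →ₗ[Fq f] V f m) w) = B u w}
  one_mem' := by intro u w; simp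
  mul_mem' := by
    intro g h hg hh u w
    simp only [Units.val_mul, Module.End.mul_apply]
    rw [hg, hh]
  inv_mem' := by
    intro g hg u w
    have := hg (((g⁻¹ : _ˣ) : V f m →ₗ[Fq f] V f m) u)
      (((g⁻¹ : _ˣ) : V f m →ₗ[Fq f] V f m) w)
    simpa [← Module.End.mul_apply, ← Units.val_mul] using this.symm

/-- The natural action of the symplectic group on `V` by matrix multiplication. -/
noncomputable instance {f m : ℕ} : MulAction (Sp f m) (V f m) where
  smul g v := ((g : (V f m →ₗ[Fq f] V f m)ˣ) : V f m →ₗ[Fq f] V f m) v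
  one_smul v := by simp [HSMul.hSMul, SMul.smul]
  mul_smul g h v := by simp [HSMul.hSMul, SMul.smul, Units.val_mul]

/-- The quadratic form of plus type: `Q⁺(x,y) = ∑ i, x i * y i`. -/
noncomputable def Qplus {f m : ℕ} (v : V f m) : Fq f := ∑ i, v.1 i * v.2 i

/-- The quadratic form of minus type:
`Q⁻(x,y) = x 0 ^ 2 + a * y 0 ^ 2 + ∑ i, x i * y i`. -/
noncomputable def Qminus {f m : ℕ} (hm : 0 < m) (a : Fq f) (v : V f m) : Fq f :=
  v.1 ⟨0, hm⟩ ^ 2 + a * v.2 ⟨0, hm⟩ ^ 2 + ∑ i, v.1 i * v.2 i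

/-- The isometry group of a quadratic form `Q` on `V`, as a subgroup of `Sp`. -/
def Ogrp {f m : ℕ} (Q : V f m → Fq f) : Subgroup (Sp f m) where
  carrier := {g | ∀ v : V f m, Q (g • v) = Q v}
  one_mem' := by intro v; rw [one_smul]
  mul_mem' := by intro g h hg hh v; rw [mul_smul, hg, hh]
  inv_mem' := by
    intro g hg v
    conv_rhs => rw [← smul_inv_smul g v]
    rw [hg]

/-- The orthogonal group `O⁺ = O⁺_{2m}(2^f)` of the plus-type form, inside `Sp`. -/
noncomputable def Oplus (f m : ℕ) : Subgroup (Sp f m) := Ogrp Qplus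

/-- The orthogonal group `O⁻ = O⁻_{2m}(2^f)` of the minus-type form, inside `Sp`. -/
noncomputable def Ominus (f m : ℕ) (hm : 0 < m) (a : Fq f) : Subgroup (Sp f m) :=
  Ogrp (Qminus hm a)

/-!
For `g ∈ Sp(V)` the map `v ↦ Q (g⁻¹ v) + Q v` is additive and Frobenius-semilinear, hence equal
to `B(v, c)²` for a unique vector `c = C(g)`. The map `C` is constant on the cosets `g O`,
separates them and satisfies `C(o g) = o • C(g)`, so `G ⧸ O` is isomorphic as an `O`-set to the
set of values of `C`. These are exactly the `c` with `Q c ∈ ℘(F) = {β² + β}`. Transvections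
realise every such `c`. Conversely, `Q' = Q + B(·, c)²` is `Q ∘ g⁻¹`, so there are as many pairs
`(u, w)` with `Q (u + w) = Q' w` as with `Q (u + w) = Q w`; but if `Q c ∉ ℘(F)`, then for each
single `u` there are at most as many `w` of the first kind, and strictly fewer for `u = 0`.
By Witt's theorem, proved with orthogonal transvections, the `O`-orbits on these vectors are `{0}`
and the level sets `{c ≠ 0 | Q c = t}` for `t ∈ ℘(F)`. Since `℘` is additive with kernel `{0, 1}`,
there are `q / 2` such `t`.
-/

noncomputable instance (f : ℕ) : Fintype (Fq f) := Fintype.ofFinite _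

lemma add_self_eq_zero_of_charTwo (R : Type*) {M : Type*} [Ring R] [CharP R 2]
    [AddCommGroup M] [Module R M] (x : M) : x + x = 0 := by
  rw [← two_smul R x, CharTwo.two_eq_zero, zero_smul]

section ArtinSchreier

variable (K : Type*) [Field K] [CharP K 2]

def artinSchreier : K →+ K where
  toFun x := x ^ 2 + x
  map_zero' := by ring
  map_add' x y := by rw [CharTwo.add_sq]; ring

variable {K}

@[simp]
lemma artinSchreier_apply (x : K) : artinSchreier K x = x ^ 2 + x := rfl

lemma sq_add_self_eq_zero_iff {x : K} : x ^ 2 + x = 0 ↔ x = 0 ∨ x = 1 := by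
  rw [show x ^ 2 + x = x * (x + 1) by ring, mul_eq_zero, ← CharTwo.sub_eq_add, sub_eq_zero]

lemma exists_ne_zero_sq_add_self_eq {t : K} (ht : t ∈ (artinSchreier K).range) :
    ∃ β ≠ 0, β ^ 2 + β = t := by
  obtain ⟨β, rfl⟩ := ht
  by_cases hβ : β = 0
  · -- `β` and `β + 1` have the same image
    exact ⟨1, one_ne_zero, by simp [hβ, CharTwo.add_self_eq_zero]⟩
  · exact ⟨β, hβ, rfl⟩

lemma card_range_artinSchreier [Finite K] :
    Nat.card (artinSchreier K).range * 2 = Nat.card K := by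
  have hker : ((artinSchreier K).ker : Set K) = {0, 1} := by
    ext x
    simp [sq_add_self_eq_zero_iff]
  have hcard : Nat.card (artinSchreier K).ker = 2 := by
    rw [← SetLike.coe_sort_coe, hker, Nat.card_coe_set_eq, Set.ncard_pair zero_ne_one]
  rw [← hcard, mul_comm, ← AddSubgroup.index_ker, AddSubgroup.card_mul_index]

lemma card_range_artinSchreier_Fq {f : ℕ} (hf : f ≠ 0) :
    Nat.card (artinSchreier (Fq f)).range = 2 ^ f / 2 := by
  rw [← GaloisField.card 2 f hf, ← card_range_artinSchreier (K := Fq f),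
    Nat.mul_div_cancel _ two_pos]

end ArtinSchreier

section SymplecticForm

variable {f m : ℕ}

lemma B_add_left (u u' w : V f m) : B (u + u') w = B u w + B u' w := by
  simp only [B, ← Finset.sum_add_distrib, Prod.fst_add, Prod.snd_add, Pi.add_apply]
  exact Finset.sum_congr rfl fun _ _ => by ring

lemma B_add_right (u w w' : V f m) : B u (w + w') = B u w + B u w' := by
  simp only [B, ← Finset.sum_add_distrib, Prod.fst_add, Prod.snd_add, Pi.add_apply]
  exact Finset.sum_congr rfl fun _ _ => by ring

lemma B_smul_left (μ : Fq f) (u w : V f m) : B (μ • u) w = μ * B u w := by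
  simp only [B, Finset.mul_sum, Prod.smul_fst, Prod.smul_snd, Pi.smul_apply, smul_eq_mul]
  exact Finset.sum_congr rfl fun _ _ => by ring

lemma B_smul_right (μ : Fq f) (u w : V f m) : B u (μ • w) = μ * B u w := by
  simp only [B, Finset.mul_sum, Prod.smul_fst, Prod.smul_snd, Pi.smul_apply, smul_eq_mul]
  exact Finset.sum_congr rfl fun _ _ => by ring

lemma B_comm (u w : V f m) : B u w = B w u :=
  Finset.sum_congr rfl fun _ _ => by ring

lemma B_self (u : V f m) : B u u = 0 :=
  Finset.sum_eq_zero fun i _ => by rw [mul_comm (u.2 i)]; exact CharTwo.add_self_eq_zero _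

noncomputable def Bform : LinearMap.BilinForm (Fq f) (V f m) :=
  LinearMap.mk₂ (Fq f) B B_add_left B_smul_left B_add_right B_smul_right

@[simp]
lemma Bform_apply (u w : V f m) : Bform u w = B u w := rfl

noncomputable def ex (i : Fin m) : V f m := (Pi.single i 1, 0)

noncomputable def ey (i : Fin m) : V f m := (0, Pi.single i 1)

@[simp]
lemma B_ex (v : V f m) (i : Fin m) : B v (ex i) = v.2 i := by
  simp [B, ex, Pi.single_apply]

@[simp]
lemma B_ey (v : V f m) (i : Fin m) : B v (ey i) = v.1 i := by
  simp [B, ey, Pi.single_apply]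

lemma sum_smul_ex_add_smul_ey (v : V f m) : ∑ i, (v.1 i • ex i + v.2 i • ey i) = v := by
  ext j <;> simp [ex, ey, Prod.fst_sum, Prod.snd_sum, Pi.single_apply]

lemma B_ext {u u' : V f m} (h : ∀ w, B u w = B u' w) : u = u' := by
  ext i
  · simpa using h (ey i)
  · simpa using h (ex i)

lemma exists_B_eq_one {u : V f m} (hu : u ≠ 0) : ∃ w, B u w = 1 := by
  by_contra! h
  refine hu (B_ext fun w => ?_)
  by_contra hw
  refine h ((B u w)⁻¹ • w) ?_
  rw [B_smul_right, inv_mul_cancel₀ (by simpa [B_comm 0, B] using hw)]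

lemma exists_B_eq_apply (φ : V f m →ₗ[Fq f] Fq f) : ∃ d, ∀ v, B v d = φ v := by
  refine ⟨(fun i => φ (ey i), fun i => φ (ex i)), fun v => ?_⟩
  conv_rhs => rw [← sum_smul_ex_add_smul_ey v]
  simp [B, map_sum]

lemma exists_B_eq_one_B_eq_zero {u c : V f m} (h : ∀ μ : Fq f, u ≠ μ • c) :
    ∃ w, B u w = 1 ∧ B c w = 0 := by
  suffices ∃ w, B c w = 0 ∧ B u w ≠ 0 by
    obtain ⟨w, hcw, huw⟩ := this
    exact ⟨(B u w)⁻¹ • w, by rw [B_smul_right, inv_mul_cancel₀ huw],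
      by rw [B_smul_right, hcw, mul_zero]⟩
  by_contra! hker
  obtain hc | hc := eq_or_ne c 0
  · exact h 0 (B_ext fun w => by simpa [hc, B] using hker w (by simp [hc, B]))
  obtain ⟨w₀, hw₀⟩ := exists_B_eq_one hc
  -- projecting along `w₀` onto the kernel of `B c` shows `B u = B u w₀ • B c`
  refine h (B u w₀) (B_ext fun w => ?_)
  have hproj := hker (w + B c w • w₀)
    (by rw [B_add_right, B_smul_right, hw₀, mul_one, CharTwo.add_self_eq_zero])
  rw [B_add_right, B_smul_right, ← CharTwo.sub_eq_add, sub_eq_zero] at hproj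
  rw [hproj, B_smul_left, mul_comm]

lemma exists_B_eq_B_eq {x y : V f m} (hxy : ∀ μ : Fq f, x ≠ μ • y) (hyx : ∀ μ : Fq f, y ≠ μ • x)
    (α β : Fq f) : ∃ z, B x z = α ∧ B y z = β := by
  obtain ⟨w₁, hxw₁, hyw₁⟩ := exists_B_eq_one_B_eq_zero hxy
  obtain ⟨w₂, hyw₂, hxw₂⟩ := exists_B_eq_one_B_eq_zero hyx
  exact ⟨α • w₁ + β • w₂, by simp [B_add_right, B_smul_right, *],
    by simp [B_add_right, B_smul_right, *]⟩

end SymplecticForm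

namespace Sp

variable {f m : ℕ}

lemma smul_def (g : Sp f m) (v : V f m) :
    g • v = ((g : (V f m →ₗ[Fq f] V f m)ˣ) : V f m →ₗ[Fq f] V f m) v := rfl

lemma smul_add (g : Sp f m) (u w : V f m) : g • (u + w) = g • u + g • w := by
  simp [smul_def]

lemma smul_comm (g : Sp f m) (μ : Fq f) (v : V f m) : g • (μ • v) = μ • g • v := by
  simp [smul_def]

lemma smul_zero (g : Sp f m) : g • (0 : V f m) = 0 :=
  map_zero _

lemma B_smul_smul (g : Sp f m) (u w : V f m) : B (g • u) (g • w) = B u w := g.2 u w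

lemma B_inv_smul_left (g : Sp f m) (u w : V f m) : B (g⁻¹ • u) w = B u (g • w) := by
  rw [← B_smul_smul g, smul_inv_smul]

lemma smul_eq_zero_iff (g : Sp f m) {v : V f m} : g • v = 0 ↔ v = 0 :=
  ⟨fun h => by simpa [smul_zero] using congrArg (g⁻¹ • ·) h, fun h => h ▸ smul_zero g⟩

end Sp

section Transvection

variable {f m : ℕ}

lemma transvection_comp_self (κ : Fq f) (e : V f m) :
    LinearMap.transvection (κ • Bform e) e ∘ₗ LinearMap.transvection (κ • Bform e) e =
      LinearMap.id := by
  rw [LinearMap.transvection.comp_of_left_eq (by simp [B_self]),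
    add_self_eq_zero_of_charTwo (Fq f), LinearMap.transvection.of_right_eq_zero]

noncomputable def symplecticTransvection (κ : Fq f) (e : V f m) : Sp f m :=
  ⟨⟨_, _, transvection_comp_self κ e, transvection_comp_self κ e⟩, fun u w => by
    simp only [LinearMap.transvection.apply, LinearMap.smul_apply, Bform_apply, smul_eq_mul,
      B_add_left, B_add_right, B_smul_left, B_smul_right, B_self, B_comm u e]
    linear_combination CharTwo.add_self_eq_zero (κ * (B e u * B e w))⟩

lemma symplecticTransvection_smul (κ : Fq f) (e v : V f m) :
    symplecticTransvection κ e • v = v + (κ * B e v) • e := rfl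

lemma symplecticTransvection_inv (κ : Fq f) (e : V f m) :
    (symplecticTransvection κ e)⁻¹ = symplecticTransvection κ e :=
  inv_eq_of_mul_eq_one_left (Subtype.ext (Units.ext (transvection_comp_self κ e)))

end Transvection

section QuadraticForm

variable {f m : ℕ}

structure IsQuadraticForB (Q : V f m → Fq f) : Prop where
  map_add : ∀ u w, Q (u + w) = Q u + Q w + B u w
  map_smul : ∀ (μ : Fq f) v, Q (μ • v) = μ ^ 2 * Q v

variable {Q : V f m → Fq f} (hQ : IsQuadraticForB Q)
include hQ

lemma IsQuadraticForB.map_zero : Q 0 = 0 := by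
  simpa using hQ.map_smul 0 0

lemma IsQuadraticForB.map_symplecticTransvection (κ : Fq f) (e v : V f m) :
    Q (symplecticTransvection κ e • v) = Q v + (κ ^ 2 * Q e + κ) * B e v ^ 2 := by
  rw [symplecticTransvection_smul, hQ.map_add, hQ.map_smul, B_smul_right, B_comm]
  ring

lemma IsQuadraticForB.symplecticTransvection_mem_Ogrp {e : V f m} (he : Q e ≠ 0) :
    symplecticTransvection (Q e)⁻¹ e ∈ Ogrp Q := fun v => by
  rw [hQ.map_symplecticTransvection, inv_pow, sq, mul_inv, mul_assoc, inv_mul_cancel₀ he, mul_one,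
    CharTwo.add_self_eq_zero, zero_mul, add_zero]

lemma IsQuadraticForB.exists_mem_Ogrp_smul_eq_of_B_ne_zero {x y : V f m} (hxy : B x y ≠ 0)
    (hQxy : Q y = Q x) : ∃ o ∈ Ogrp Q, o • y = x := by
  have hQsum : Q (x + y) = B x y := by
    rw [hQ.map_add, hQxy, CharTwo.add_self_eq_zero, zero_add]
  refine ⟨_, hQ.symplecticTransvection_mem_Ogrp (hQsum ▸ hxy), ?_⟩
  rw [symplecticTransvection_smul, B_add_left, B_self, add_zero, hQsum,
    inv_mul_cancel₀ hxy, one_smul, add_comm x, ← add_assoc,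
    add_self_eq_zero_of_charTwo (Fq f), zero_add]

end QuadraticForm

section Cocycle

variable {f m : ℕ}

lemma exists_B_sq_eq (θ : V f m → Fq f) (hadd : ∀ u w, θ (u + w) = θ u + θ w)
    (hsmul : ∀ (μ : Fq f) v, θ (μ • v) = μ ^ 2 * θ v) : ∃ d, ∀ v, θ v = B v d ^ 2 := by
  let φ : V f m →ₗ[Fq f] Fq f :=
    { toFun := fun v => (frobeniusEquiv (Fq f) 2).symm (θ v)
      map_add' := fun u w => by simp only [hadd, map_add]
      map_smul' := fun μ v => by
        simp only [hsmul, map_mul, frobeniusEquiv_symm_pow, RingHom.id_apply, smul_eq_mul] }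
  obtain ⟨d, hd⟩ := exists_B_eq_apply φ
  exact ⟨d, fun v => by rw [hd]; exact (frobeniusEquiv_symm_pow_p (Fq f) 2 (θ v)).symm⟩

lemma eq_of_forall_B_sq_eq {d d' : V f m} (h : ∀ v, B v d ^ 2 = B v d' ^ 2) : d = d' := by
  refine (B_ext fun w => ?_)
  rw [B_comm, B_comm d']
  exact frobenius_inj (Fq f) 2 (h w)

variable {Q : V f m → Fq f} (hQ : IsQuadraticForB Q)
include hQ

lemma IsQuadraticForB.exists_cocycle (g : Sp f m) :
    ∃ d, ∀ v, Q (g⁻¹ • v) = Q v + B v d ^ 2 := by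
  obtain ⟨d, hd⟩ := exists_B_sq_eq (fun v => Q (g⁻¹ • v) + Q v)
    (fun u w => by
      simp only [Sp.smul_add, hQ.map_add, Sp.B_smul_smul]
      linear_combination CharTwo.add_self_eq_zero (B u w))
    (fun μ v => by simp only [Sp.smul_comm, hQ.map_smul]; ring)
  exact ⟨d, fun v => by rw [← hd]; linear_combination -CharTwo.add_self_eq_zero (Q v)⟩

noncomputable def IsQuadraticForB.cocycle (g : Sp f m) : V f m := (hQ.exists_cocycle g).choose

lemma IsQuadraticForB.cocycle_spec (g : Sp f m) (v : V f m) :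
    Q (g⁻¹ • v) = Q v + B v (hQ.cocycle g) ^ 2 :=
  (hQ.exists_cocycle g).choose_spec v

lemma IsQuadraticForB.cocycle_eq {g : Sp f m} {d : V f m}
    (h : ∀ v, Q (g⁻¹ • v) = Q v + B v d ^ 2) : hQ.cocycle g = d :=
  eq_of_forall_B_sq_eq fun v => add_left_cancel ((hQ.cocycle_spec g v).symm.trans (h v))

lemma IsQuadraticForB.cocycle_mul_of_mem (g : Sp f m) {o : Sp f m} (ho : o ∈ Ogrp Q) :
    hQ.cocycle (g * o) = hQ.cocycle g :=
  hQ.cocycle_eq fun v => by rw [mul_inv_rev, mul_smul, inv_mem ho, hQ.cocycle_spec]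

lemma IsQuadraticForB.cocycle_mul_of_mem_left (g : Sp f m) {o : Sp f m} (ho : o ∈ Ogrp Q) :
    hQ.cocycle (o * g) = o • hQ.cocycle g :=
  hQ.cocycle_eq fun v => by
    rw [mul_inv_rev, mul_smul, hQ.cocycle_spec, inv_mem ho, Sp.B_inv_smul_left]

lemma IsQuadraticForB.inv_mul_mem_of_cocycle_eq {g₁ g₂ : Sp f m}
    (h : hQ.cocycle g₁ = hQ.cocycle g₂) : g₁⁻¹ * g₂ ∈ Ogrp Q := fun w => by
  rw [mul_smul, hQ.cocycle_spec, h, ← hQ.cocycle_spec, inv_smul_smul]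

lemma IsQuadraticForB.exists_cocycle_eq {c : V f m} (hc : Q c ∈ (artinSchreier (Fq f)).range) :
    ∃ g, hQ.cocycle g = c := by
  obtain ⟨β, hβ, hβc⟩ := exists_ne_zero_sq_add_self_eq hc
  refine ⟨symplecticTransvection β⁻¹ c, hQ.cocycle_eq fun v => ?_⟩
  rw [symplecticTransvection_inv, hQ.map_symplecticTransvection, ← hβc, B_comm]
  field_simp
  linear_combination B v c ^ 2 * CharTwo.add_self_eq_zero (1 : Fq f)

end Cocycle

section Counting

open Finset
open scoped Classical

lemma sum_card_filter_add_eq_comp_perm {G β : Type*} [AddGroup G] [Fintype G] (Q : G → β)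
    (σ : Equiv.Perm G) :
    ∑ u, #{w | Q (u + w) = Q (σ w)} = ∑ u, #{w | Q (u + w) = Q w} := by
  have hswap : ∀ R : G → β, ∑ u, #{w | Q (u + w) = R w} = ∑ w, #{x | Q x = R w} := fun R => by
    simp only [card_filter]
    rw [Finset.sum_comm]
    refine Fintype.sum_congr _ _ fun w => ?_
    exact Fintype.sum_equiv (Equiv.addRight w) _ _ fun u => rfl
  rw [hswap, hswap, Equiv.sum_comp σ (fun w => #{x | Q x = Q w})]

lemma card_fiber_mul_card_of_surjective {G K : Type*} [AddGroup G] [Fintype G] [AddGroup K]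
    [Fintype K] (L : G →+ K) (hL : Function.Surjective L) (t : K) :
    #{g | L g = t} * Fintype.card K = Fintype.card G := by
  calc #{g | L g = t} * Fintype.card K = ∑ s : K, #{g | L g = s} := by
        rw [Finset.sum_congr rfl fun s _ =>
          AddMonoidHom.card_fiber_eq_of_mem_range L (hL s) (hL t), sum_const, card_univ,
          smul_eq_mul, mul_comm]
    _ = Fintype.card G :=
        (card_eq_sum_card_fiberwise fun _ _ => mem_coe.2 (mem_univ _)).symm

variable {f m : ℕ} {Q : V f m → Fq f}

lemma card_filter_sq_B_lt {c : V f m} (hc : c ≠ 0) :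
    #{w | Q (0 + w) = Q w + B w c ^ 2} < #{w | Q (0 + w) = Q w} := by
  obtain ⟨w, hw⟩ := exists_B_eq_one hc
  simp only [zero_add, left_eq_add, filter_true]
  exact card_lt_card (filter_ssubset.2 ⟨w, mem_univ _, by simp [B_comm w, hw]⟩)

variable (hQ : IsQuadraticForB Q)
include hQ

lemma IsQuadraticForB.add_eq_add_iff (u w : V f m) (s : Fq f) :
    Q (u + w) = Q w + s ↔ B u w + s = Q u := by
  rw [hQ.map_add]
  grind

lemma IsQuadraticForB.card_filter_sq_B_le {c : V f m}
    (hc : Q c ∉ (artinSchreier (Fq f)).range) (u : V f m) :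
    #{w | Q (u + w) = Q w + B w c ^ 2} ≤ #{w | Q (u + w) = Q w} := by
  obtain rfl | hu := eq_or_ne u 0
  · exact (card_filter_sq_B_lt fun h => hc (by simp [h, hQ.map_zero])).le
  have hrhs : #{w | Q (u + w) = Q w} = #{w | Bform u w = Q u} := by
    congr 1; exact filter_congr fun w _ => by simpa using hQ.add_eq_add_iff u w 0
  simp only [hQ.add_eq_add_iff, B_comm _ c]
  by_cases hdep : ∃ μ : Fq f, u = μ • c
  · obtain ⟨μ, rfl⟩ := hdep
    have hμ : μ ≠ 0 := by rintro rfl; simp at hu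
    refine (card_eq_zero.2 (filter_eq_empty_iff.2 fun w _ hw => hc ⟨B c w / μ, ?_⟩)).trans_le
      (Nat.zero_le _)
    rw [B_smul_left, hQ.map_smul] at hw
    simp only [artinSchreier_apply]
    field_simp
    linear_combination hw
  push Not at hdep
  obtain ⟨w₁, huw₁, hcw₁⟩ := exists_B_eq_one_B_eq_zero hdep
  let L : V f m →+ Fq f := (Bform u).toAddMonoidHom +
    (frobenius (Fq f) 2).toAddMonoidHom.comp (Bform c).toAddMonoidHom
  have hL : Function.Surjective L := fun t => ⟨t • w₁, by simp [L, huw₁, hcw₁]⟩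
  have hB : Function.Surjective (Bform u).toAddMonoidHom := fun t =>
    ⟨t • w₁, by simp [huw₁]⟩
  refine (Nat.eq_of_mul_eq_mul_right (Fintype.card_pos (α := Fq f)) ?_).le
  rw [hrhs]
  exact (card_fiber_mul_card_of_surjective L hL (Q u)).trans
    (card_fiber_mul_card_of_surjective _ hB (Q u)).symm

lemma IsQuadraticForB.mem_range_of_perm {c : V f m} (σ : Equiv.Perm (V f m))
    (hσ : ∀ w, Q (σ w) = Q w + B w c ^ 2) : Q c ∈ (artinSchreier (Fq f)).range := by
  by_contra hc
  have hc0 : c ≠ 0 := fun h => hc ⟨0, by simp [h, hQ.map_zero]⟩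
  have hsum := sum_card_filter_add_eq_comp_perm Q σ
  simp only [hσ] at hsum
  exact hsum.not_lt (sum_lt_sum (fun u _ => hQ.card_filter_sq_B_le hc u)
    ⟨0, mem_univ _, card_filter_sq_B_lt hc0⟩)

lemma IsQuadraticForB.cocycle_mem_range (g : Sp f m) :
    Q (hQ.cocycle g) ∈ (artinSchreier (Fq f)).range :=
  hQ.mem_range_of_perm (MulAction.toPerm g⁻¹) (hQ.cocycle_spec g)

end Counting

section Witt

lemma forall_ne_smul_symm {K M : Type*} [Field K] [AddCommGroup M] [Module K M] {x y : M}
    (hx : x ≠ 0) (h : ∀ μ : K, y ≠ μ • x) (μ : K) : x ≠ μ • y := by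
  rintro rfl
  have hμ : μ ≠ 0 := by rintro rfl; simp at hx
  exact h μ⁻¹ (by rw [smul_smul, inv_mul_cancel₀ hμ, one_smul])

variable {f m : ℕ} {Q : V f m → Fq f} (hQ : IsQuadraticForB Q)
include hQ

lemma IsQuadraticForB.exists_add_smul_eq {z e : V f m} (he : Q e = 0) (hze : B z e ≠ 0)
    (t : Fq f) : ∃ τ : Fq f, Q (z + τ • e) = t :=
  ⟨(t - Q z) / B z e, by rw [hQ.map_add, hQ.map_smul, he, B_smul_right]; field_simp; ring⟩

lemma IsQuadraticForB.ne_smul_of_Q_eq {x y : V f m} (hx : Q x ≠ 0) (hQxy : Q y = Q x)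
    (hne : y ≠ x) (μ : Fq f) : y ≠ μ • x := by
  rintro rfl
  rw [hQ.map_smul, mul_eq_right₀ hx, ← one_pow 2] at hQxy
  rw [frobenius_inj (Fq f) 2 hQxy, one_smul] at hne
  exact hne rfl

lemma IsQuadraticForB.exists_Q_eq_B_ne_zero_B_ne_zero {x y : V f m} (hx : x ≠ 0) (hy : y ≠ 0)
    (hne : x ≠ y) (hxy : B x y = 0) (hQxy : Q y = Q x)
    (ht : Q x ∈ (artinSchreier (Fq f)).range) : ∃ z, Q z = Q x ∧ B x z ≠ 0 ∧ B y z ≠ 0 := by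
  -- move a vector `z₀` with the right `B`-values along an isotropic `e ⊥ x, y` until `Q z₀ = Q x`
  suffices ∃ e z₀, Q e = 0 ∧ B x e = 0 ∧ B y e = 0 ∧ B z₀ e ≠ 0 ∧ B x z₀ ≠ 0 ∧ B y z₀ ≠ 0 by
    obtain ⟨e, z₀, he, hxe, hye, hz₀e, hxz₀, hyz₀⟩ := this
    obtain ⟨τ, hτ⟩ := hQ.exists_add_smul_eq he hz₀e (Q x)
    exact ⟨z₀ + τ • e, hτ, by simpa [B_add_right, B_smul_right, hxe],
      by simpa [B_add_right, B_smul_right, hye]⟩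
  by_cases hx0 : Q x = 0
  · refine ⟨x, ?_⟩
    obtain ⟨μ, rfl⟩ | hdep := em (∃ μ : Fq f, y = μ • x)
    · obtain ⟨z₀, hz₀⟩ := exists_B_eq_one hx
      have hμ : μ ≠ 0 := by rintro rfl; simp at hy
      exact ⟨z₀, hx0, B_self x, by rw [B_comm, hxy], by simp [B_comm z₀, hz₀],
        by simp [hz₀], by simp [B_smul_left, hz₀, hμ]⟩
    push Not at hdep
    obtain ⟨z₀, hxz₀, hyz₀⟩ :=
      exists_B_eq_B_eq (forall_ne_smul_symm hx hdep) hdep (1 : Fq f) 1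
    exact ⟨z₀, hx0, B_self x, by rw [B_comm, hxy], by simp [B_comm z₀, hxz₀],
      by simp [hxz₀], by simp [hyz₀]⟩
  · obtain ⟨β, hβx⟩ := ht
    have hβ : β ≠ 0 ∧ β ≠ 1 := by
      simpa [← hβx, sq_add_self_eq_zero_iff, not_or] using hx0
    obtain ⟨z₀, hxz₀, hyz₀⟩ := exists_B_eq_B_eq
      (hQ.ne_smul_of_Q_eq (hQxy ▸ hx0) hQxy.symm hne) (hQ.ne_smul_of_Q_eq hx0 hQxy hne.symm) 1 β
    refine ⟨x + y, z₀, ?_, ?_, ?_, ?_, by simp [hxz₀], by simp [hyz₀, hβ.1]⟩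
    · rw [hQ.map_add, hQxy, hxy, add_zero, CharTwo.add_self_eq_zero]
    · rw [B_add_right, B_self, hxy, add_zero]
    · rw [B_add_right, B_self, B_comm, hxy, add_zero]
    · rw [B_add_right, B_comm z₀, B_comm z₀, hxz₀, hyz₀, ← CharTwo.sub_eq_add, sub_ne_zero]
      exact hβ.2.symm

lemma IsQuadraticForB.exists_mem_Ogrp_smul_eq {x y : V f m} (hx : x ≠ 0) (hy : y ≠ 0)
    (hQxy : Q y = Q x) (ht : Q x ∈ (artinSchreier (Fq f)).range) : ∃ o ∈ Ogrp Q, o • y = x := by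
  obtain rfl | hne := eq_or_ne x y
  · exact ⟨1, one_mem _, one_smul _ _⟩
  obtain hxy | hxy := eq_or_ne (B x y) 0
  · obtain ⟨z, hz, hxz, hyz⟩ := hQ.exists_Q_eq_B_ne_zero_B_ne_zero hx hy hne hxy hQxy ht
    obtain ⟨o₁, ho₁, hzy⟩ :=
      hQ.exists_mem_Ogrp_smul_eq_of_B_ne_zero (by rwa [B_comm]) (hQxy.trans hz.symm)
    obtain ⟨o₂, ho₂, hxz⟩ := hQ.exists_mem_Ogrp_smul_eq_of_B_ne_zero hxz hz
    exact ⟨o₂ * o₁, mul_mem ho₂ ho₁, by rw [mul_smul, hzy, hxz]⟩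
  · exact hQ.exists_mem_Ogrp_smul_eq_of_B_ne_zero hxy hQxy

end Witt

section Orbits

variable {f m : ℕ}

open scoped Classical in
noncomputable def orbitInvariant (Q : V f m → Fq f) (c : V f m) : Option (Fq f) :=
  if c = 0 then none else some (Q c)

variable {Q : V f m → Fq f} (hQ : IsQuadraticForB Q)
include hQ

lemma IsQuadraticForB.exists_mem_Ogrp_smul_eq_of_orbitInvariant_eq {c d : V f m}
    (hc : Q c ∈ (artinSchreier (Fq f)).range) (h : orbitInvariant Q c = orbitInvariant Q d) :
    ∃ o ∈ Ogrp Q, o • d = c := by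
  unfold orbitInvariant at h
  split_ifs at h with hc0 hd0 hd0
  · exact ⟨1, one_mem _, by rw [hc0, hd0, one_smul]⟩
  · exact hQ.exists_mem_Ogrp_smul_eq hc0 hd0 (Option.some_injective _ h).symm hc

noncomputable def IsQuadraticForB.cosetCocycle : Sp f m ⧸ Ogrp Q → V f m :=
  Quotient.lift hQ.cocycle fun a b h => by
    rw [← mul_inv_cancel_left a b, hQ.cocycle_mul_of_mem a (QuotientGroup.leftRel_apply.1 h)]

lemma IsQuadraticForB.cosetCocycle_injective : Function.Injective hQ.cosetCocycle := by
  rintro ⟨g₁⟩ ⟨g₂⟩ h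
  exact QuotientGroup.eq.2 (hQ.inv_mul_mem_of_cocycle_eq h)

lemma IsQuadraticForB.cosetCocycle_smul (o : Ogrp Q) (x : Sp f m ⧸ Ogrp Q) :
    hQ.cosetCocycle (o • x) = (o : Sp f m) • hQ.cosetCocycle x := by
  induction x using QuotientGroup.induction_on with
  | H g => exact hQ.cocycle_mul_of_mem_left g o.2

lemma IsQuadraticForB.range_cosetCocycle :
    Set.range hQ.cosetCocycle = {c | Q c ∈ (artinSchreier (Fq f)).range} := by
  ext c
  constructor
  · rintro ⟨⟨g⟩, rfl⟩
    exact hQ.cocycle_mem_range g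
  · intro hc
    obtain ⟨g, hg⟩ := hQ.exists_cocycle_eq hc
    exact ⟨g, hg⟩

noncomputable def IsQuadraticForB.orbitLabel :
    Quotient (MulAction.orbitRel (Ogrp Q) (Sp f m ⧸ Ogrp Q)) → Option (Fq f) :=
  Quotient.lift (fun x => orbitInvariant Q (hQ.cosetCocycle x)) <| by
    classical
    rintro _ x ⟨o, rfl⟩
    dsimp only [orbitInvariant]
    rw [hQ.cosetCocycle_smul, o.2]
    exact if_congr (Sp.smul_eq_zero_iff _) rfl rfl

lemma IsQuadraticForB.orbitLabel_injective : Function.Injective hQ.orbitLabel := by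
  rintro ⟨x⟩ ⟨y⟩ h
  obtain ⟨o, ho, hoy⟩ := hQ.exists_mem_Ogrp_smul_eq_of_orbitInvariant_eq
    (hQ.range_cosetCocycle.subset ⟨x, rfl⟩) h
  refine Quotient.sound ⟨⟨o, ho⟩, hQ.cosetCocycle_injective ?_⟩
  rw [hQ.cosetCocycle_smul, ← hoy]

lemma IsQuadraticForB.range_orbitLabel (hsurj : ∀ t, ∃ v ≠ 0, Q v = t) :
    Set.range hQ.orbitLabel =
      insert none (some '' ((artinSchreier (Fq f)).range : Set (Fq f))) := by
  rw [← Quotient.mk_surjective.range_comp, show hQ.orbitLabel ∘ Quotient.mk _ =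
    orbitInvariant Q ∘ hQ.cosetCocycle from rfl, Set.range_comp, hQ.range_cosetCocycle]
  ext (_ | t)
  · simp only [Set.mem_insert_iff, true_or, iff_true]
    exact ⟨0, by simp only [Set.mem_ofPred_eq, hQ.map_zero, zero_mem], by simp [orbitInvariant]⟩
  · simp only [Set.mem_insert_iff, reduceCtorEq, Set.mem_image, SetLike.mem_coe, Option.some.injEq,
      exists_eq_right, false_or, Set.mem_ofPred_eq, orbitInvariant]
    constructor
    · rintro ⟨c, hc, h⟩
      split_ifs at h
      exact Option.some_injective _ h ▸ hc
    · intro ht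
      obtain ⟨v, hv, rfl⟩ := hsurj t
      exact ⟨v, ht, if_neg hv⟩

theorem IsQuadraticForB.card_orbits (hsurj : ∀ t, ∃ v ≠ 0, Q v = t) :
    Nat.card (Quotient (MulAction.orbitRel (Ogrp Q) (Sp f m ⧸ Ogrp Q))) =
      Nat.card (artinSchreier (Fq f)).range + 1 := by
  rw [← Nat.card_range_of_injective hQ.orbitLabel_injective, hQ.range_orbitLabel hsurj,
    Nat.card_coe_set_eq, Set.ncard_insert_of_notMem (by simp) (Set.toFinite _),
    Set.ncard_image_of_injective _ (Option.some_injective _), ← Nat.card_coe_set_eq,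
    SetLike.coe_sort_coe]

end Orbits

section ConcreteForms

variable {f m : ℕ}

lemma isQuadraticForB_Qplus : IsQuadraticForB (Qplus : V f m → Fq f) where
  map_add u w := by
    simp only [Qplus, B, ← Finset.sum_add_distrib, Prod.fst_add, Prod.snd_add, Pi.add_apply]
    exact Finset.sum_congr rfl fun _ _ => by ring
  map_smul μ v := by
    simp only [Qplus, Finset.mul_sum, Prod.smul_fst, Prod.smul_snd, Pi.smul_apply, smul_eq_mul]
    exact Finset.sum_congr rfl fun _ _ => by ring

lemma Qminus_eq (hm : 0 < m) (a : Fq f) (v : V f m) :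
    Qminus hm a v = v.1 ⟨0, hm⟩ ^ 2 + a * v.2 ⟨0, hm⟩ ^ 2 + Qplus v := rfl

lemma isQuadraticForB_Qminus (hm : 0 < m) (a : Fq f) : IsQuadraticForB (Qminus hm a) where
  map_add u w := by
    simp only [Qminus_eq, isQuadraticForB_Qplus.map_add, Prod.fst_add, Prod.snd_add, Pi.add_apply,
      CharTwo.add_sq]
    ring
  map_smul μ v := by
    simp only [Qminus_eq, isQuadraticForB_Qplus.map_smul, Prod.smul_fst, Prod.smul_snd,
      Pi.smul_apply, smul_eq_mul]
    ring

lemma Qplus_single (i : Fin m) (s t : Fq f) :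
    Qplus ((Pi.single i s, Pi.single i t) : V f m) = s * t := by
  simp [Qplus, Pi.single_apply]

lemma exists_ne_zero_Qplus_eq (hm : 0 < m) (t : Fq f) : ∃ v : V f m, v ≠ 0 ∧ Qplus v = t :=
  ⟨(Pi.single ⟨0, hm⟩ 1, Pi.single ⟨0, hm⟩ t), by simp [Prod.ext_iff], by simp [Qplus_single]⟩

lemma exists_ne_zero_Qminus_eq (hm : 0 < m) (hm₁ : 1 < m) (a t : Fq f) :
    ∃ v : V f m, v ≠ 0 ∧ Qminus hm a v = t := by
  refine ⟨(Pi.single ⟨1, hm₁⟩ 1, Pi.single ⟨1, hm₁⟩ t), by simp [Prod.ext_iff], ?_⟩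
  have h01 : (⟨0, hm⟩ : Fin m) ≠ ⟨1, hm₁⟩ := by simp
  simp [Qminus_eq, h01, Qplus_single]

end ConcreteForms

/-- For `m ≥ 2` and `q = 2^f`, each orthogonal subgroup `O^ε` of `G = Sp_{2m}(2^f)` has
exactly `q/2 + 1` orbits on the corresponding coset space `Ω^ε = G/O^ε`; equivalently
`⟨π^ε, π^ε⟩ = q/2 + 1` for the permutation character `π^ε`. -/
theorem orthogonal_orbits_on_own_cosets (f m : ℕ) (hf : 1 ≤ f) (hm : 2 ≤ m) (a : Fq f) :
    Nat.card (Quotient (MulAction.orbitRel (Oplus f m) (Sp f m ⧸ Oplus f m))) =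
      2 ^ f / 2 + 1 ∧
    Nat.card (Quotient (MulAction.orbitRel (Ominus f m (by omega) a)
        (Sp f m ⧸ Ominus f m (by omega) a))) = 2 ^ f / 2 + 1 := by
  rw [← card_range_artinSchreier_Fq (by omega)]
  exact ⟨isQuadraticForB_Qplus.card_orbits (exists_ne_zero_Qplus_eq (by omega)),
    (isQuadraticForB_Qminus _ a).card_orbits (exists_ne_zero_Qminus_eq _ hm a)⟩
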